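/- If Θ ⊊ Π is normal, then W(Θ)′ = W(Θ). -/

import Mathlib

/-!
`W(Θ)′ ⊆ W(Θ)`: for a useful root `α`, `σ_α = w^α w_Θ` maps `Θ` into itself. Indeed `w_Θ` maps
`Θ` onto `-Θ` and `w^α` maps the base of `Δ⁺(α)`, which contains `Θ`, onto its negative, so
`σ_α θ` is a simple root of `Δ⁺(α)`. In `span Θ` these are the elements of `Θ`; outside it,
the involution `σ_α`, which sends `Δ⁺(α) \ span Θ` to negative roots, would send `σ_α θ` to the
negative root `θ`.

`W(Θ) ⊆ W(Θ)′`: induct on the number of positive roots outside `span Θ` made negative by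
`w ∈ W(Θ)`. If there are none, `w` keeps `Δ⁺` positive and hence `w = 1`. Otherwise `w` makes
some simple root `α ∉ Θ` negative; `α` is useful by normality, and `w` makes all of
`Δ⁺(α) \ span Θ` negative. As `σ_α` sends `Δ⁺(α) \ span Θ` to negative roots and permutes the
remaining positive roots outside `span Θ`, `w σ_α` makes fewer of them negative.

The root-system input is elementary: the reflection in an indecomposable element of `Δ⁺ ∩ L`
(for a subspace `L`) permutes the other elements, which yields longest elements; and by the
exchange condition an element of `W` keeping `Δ⁺` positive is trivial.
-/

open Pointwise
open scoped RealInnerProductSpace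

noncomputable section

variable {V : Type*} [NormedAddCommGroup V] [InnerProductSpace ℝ V] [FiniteDimensional ℝ V]

/-- The coroot `α∨ = 2α/⟨α,α⟩`. -/
def coroot (α : V) : V := (2 / ⟪α, α⟫) • α

/-- The reflection `s_α` in the root `α`, as a linear automorphism of `V`
(the orthogonal reflection fixing the hyperplane orthogonal to `α`). -/
def rootRefl (α : V) : V ≃ₗ[ℝ] V :=
  ((Submodule.span ℝ {α})ᗮ.reflection).toLinearEquiv

/-- `w` is the longest element of the subgroup `H` with respect to a positive system `P`:
it lies in `H` and maps `P` onto `-P`. -/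
def IsLongest (H : Subgroup (V ≃ₗ[ℝ] V)) (P : Set V) (w : V ≃ₗ[ℝ] V) : Prop :=
  w ∈ H ∧ ⇑w '' P = (fun x => -x) '' P

open Classical in
/-- The longest element of `H` with respect to `P` (junk value `1` if there is none). -/
def longest (H : Subgroup (V ≃ₗ[ℝ] V)) (P : Set V) : V ≃ₗ[ℝ] V :=
  if h : ∃ w, IsLongest H P w then h.choose else 1

/-- The parabolic subgroup `W_Θ` generated by the reflections `s_α`, `α ∈ Θ`. -/
def parabolicSub (Θ : Set V) : Subgroup (V ≃ₗ[ℝ] V) :=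
  Subgroup.closure {g | ∃ α ∈ Θ, g = rootRefl α}

/-- `a*_Θ`, the orthogonal complement of the span of `Θ`. -/
def aTheta (Θ : Set V) : Submodule ℝ V := (Submodule.span ℝ Θ)ᗮ

/-- The orthogonal projection onto `a*_Θ`; `resTheta Θ α` is `α|_{a_Θ}`. -/
def resTheta (Θ : Set V) (v : V) : V := ((aTheta Θ).orthogonalProjectionOnto v : V)

/-- The set of indecomposable elements of `P`: the base of a positive system `P`. -/
def baseOf (P : Set V) : Set V := {β ∈ P | ¬ ∃ γ ∈ P, ∃ δ ∈ P, β = γ + δ}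

/-- Data of a root system with a chosen positive system `Δ⁺` and base `Π`. -/
structure RootData (V : Type*) [NormedAddCommGroup V] [InnerProductSpace ℝ V] where
  roots : Set V
  pos : Set V
  base : Set V

namespace RootData

variable (R : RootData V)

/-- The axioms: `Δ` is a finite reduced crystallographic root system spanning `V`,
`Δ⁺` is a positive system with base `Π`. -/
structure IsRootSystem : Prop where
  finite : R.roots.Finite
  span_eq_top : Submodule.span ℝ R.roots = ⊤
  zero_not_mem : (0 : V) ∉ R.roots
  reduced : ∀ α ∈ R.roots, ∀ t : ℝ, t • α ∈ R.roots → t = 1 ∨ t = -1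
  reflect_mem : ∀ α ∈ R.roots, ∀ β ∈ R.roots, rootRefl α β ∈ R.roots
  crystallographic : ∀ α ∈ R.roots, ∀ β ∈ R.roots, ∃ z : ℤ, (z : ℝ) = ⟪β, coroot α⟫
  pos_subset : R.pos ⊆ R.roots
  pos_iff_neg_not_mem : ∀ α ∈ R.roots, (α ∈ R.pos ↔ -α ∉ R.pos)
  base_subset : R.base ⊆ R.pos
  base_indep : LinearIndependent ℝ ((↑) : R.base → V)
  pos_mem_closure : ∀ β ∈ R.pos, β ∈ AddSubmonoid.closure R.base

/-- The Weyl group of `Δ`, generated by the reflections in the roots. -/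
def weylGroup : Subgroup (V ≃ₗ[ℝ] V) :=
  Subgroup.closure {g | ∃ α ∈ R.roots, g = rootRefl α}

/-- The set `S` of simple reflections `s_α`, `α ∈ Π`. -/
def simpleRefls : Set (V ≃ₗ[ℝ] V) := {g | ∃ α ∈ R.base, g = rootRefl α}

/-- `ρ`, half the sum of the positive roots. -/
def rho : V := (2 : ℝ)⁻¹ • ∑ᶠ α ∈ R.pos, α

/-- `w_Θ`, the longest element of `W_Θ`. -/
def wTheta (Θ : Set V) : V ≃ₗ[ℝ] V :=
  longest (parabolicSub Θ) (R.pos ∩ (Submodule.span ℝ Θ : Set V))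

/-- `ρ_Θ = (1/2)(ρ - w_Θ ρ)`. -/
def rhoTheta (Θ : Set V) : V := (2 : ℝ)⁻¹ • (R.rho - R.wTheta Θ R.rho)

/-- `Σ_Θ = {α|_{a_Θ} : α ∈ Δ} ∖ {0}`. -/
def SigmaTheta (Θ : Set V) : Set V := (resTheta Θ '' R.roots) \ {0}

/-- `Σ_Θ⁺ = {α|_{a_Θ} : α ∈ Δ⁺} ∖ {0}`. -/
def SigmaThetaPos (Θ : Set V) : Set V := (resTheta Θ '' R.pos) \ {0}

/-- `W(Θ) = {w ∈ W : wΘ = Θ}`. -/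
def Wset (Θ : Set V) : Set (V ≃ₗ[ℝ] V) := {w | w ∈ R.weylGroup ∧ ⇑w '' Θ = Θ}

/-- `Δ(α)`: the roots whose restriction to `a_Θ` is a real multiple of that of `α`. -/
def rootsAlong (Θ : Set V) (α : V) : Set V :=
  {β ∈ R.roots | ∃ c : ℝ, resTheta Θ β = c • resTheta Θ α}

/-- `Δ⁺(α) = Δ(α) ∩ Δ⁺`. -/
def posAlong (Θ : Set V) (α : V) : Set V := R.rootsAlong Θ α ∩ R.pos

/-- `W_Θ(α)`, the Weyl group of `Δ(α)`. -/
def weylAlong (Θ : Set V) (α : V) : Subgroup (V ≃ₗ[ℝ] V) :=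
  Subgroup.closure {g | ∃ β ∈ R.rootsAlong Θ α, g = rootRefl β}

/-- `σ_α = w^α w_Θ`, where `w^α` is the longest element of `W_Θ(α)`. -/
def sigmaRefl (Θ : Set V) (α : V) : V ≃ₗ[ℝ] V :=
  longest (R.weylAlong Θ α) (R.posAlong Θ α) * R.wTheta Θ

/-- `α` is `Θ`-useful if `σ_α` has order two. -/
def IsUseful (Θ : Set V) (α : V) : Prop := orderOf (R.sigmaRefl Θ α) = 2

/-- `α` is `Θ`-reduced if `α|_{a_Θ} ≠ 0` and `α = α̃`, i.e. `α` belongs to the base `Π(α)`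
of `Δ⁺(α)`. -/
def IsReducedRoot (Θ : Set V) (α : V) : Prop :=
  resTheta Θ α ≠ 0 ∧ α ∈ baseOf (R.posAlong Θ α)

/-- `ʳᵘΔ_Θ⁺`, the set of `Θ`-reduced `Θ`-useful positive roots. -/
def ruPos (Θ : Set V) : Set V :=
  {α ∈ R.pos | R.IsReducedRoot Θ α ∧ R.IsUseful Θ α}

/-- `W(Θ)′`, the subgroup generated by the `σ_α` for `α ∈ ʳᵘΔ_Θ⁺`. -/
def WThetaPrime (Θ : Set V) : Subgroup (V ≃ₗ[ℝ] V) :=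
  Subgroup.closure {g | ∃ α ∈ R.ruPos Θ, g = R.sigmaRefl Θ α}

/-- `ʳᵘΣ_Θ⁺ = {α|_{a_Θ} : α ∈ ʳᵘΔ_Θ⁺}`. -/
def ruSigmaPos (Θ : Set V) : Set V := resTheta Θ '' R.ruPos Θ

/-- `ʳᵘΣ_Θ = ʳᵘΣ_Θ⁺ ∪ (−ʳᵘΣ_Θ⁺)`. -/
def ruSigma (Θ : Set V) : Set V := R.ruSigmaPos Θ ∪ (fun x => -x) '' R.ruSigmaPos Θ

/-- `ᵘΣ_Θ`, the set of restrictions of the `Θ`-useful roots. -/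
def uSigma (Θ : Set V) : Set V := resTheta Θ '' {α ∈ R.roots | R.IsUseful Θ α}

/-- `ᵘΠ_Θ`, the base of `ʳᵘΣ_Θ⁺`. -/
def uPi (Θ : Set V) : Set V := baseOf (R.ruSigmaPos Θ)

/-- `S(Θ) = {σ_γ : γ ∈ ᵘΠ_Θ}`. -/
def SThetaSet (Θ : Set V) : Set (V ≃ₗ[ℝ] V) :=
  {g | ∃ α ∈ R.ruPos Θ, resTheta Θ α ∈ R.uPi Θ ∧ g = R.sigmaRefl Θ α}

/-- `K(Θ) = {w ∈ W : wΘ ⊆ Π}`. -/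
def Kset (Θ : Set V) : Set (V ≃ₗ[ℝ] V) := {w | w ∈ R.weylGroup ∧ ⇑w '' Θ ⊆ R.base}

/-- `Θ` is normal if every simple root outside `Θ` is `Θ`-useful. -/
def IsNormal (Θ : Set V) : Prop := ∀ α ∈ R.base \ Θ, R.IsUseful Θ α

/-- `Θ` is seminormal. -/
def IsSeminormal (Θ : Set V) : Prop :=
  ∃ Ψ : Set V, Θ ⊆ Ψ ∧ Ψ ⊆ R.base ∧ R.uPi Θ = resTheta Θ '' (Ψ \ Θ)

/-- `ξ` is integral: `⟨ξ,α∨⟩ ∈ ℤ` for all roots `α`. -/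
def IsIntegral (ξ : V) : Prop := ∀ α ∈ R.roots, ∃ z : ℤ, ⟪ξ, coroot α⟫ = (z : ℝ)

/-- `ξ` is regular: `⟨ξ,α⟩ ≠ 0` for all roots `α`. -/
def IsRegular (ξ : V) : Prop := ∀ α ∈ R.roots, ⟪ξ, α⟫ ≠ 0

/-- `ξ` is dominant: `⟨ξ,α∨⟩ ≥ 0` for all positive roots `α`. -/
def IsDominant (ξ : V) : Prop := ∀ α ∈ R.pos, 0 ≤ ⟪ξ, coroot α⟫

end RootData

/-- The length of `w` with respect to a generating set `S`. -/
def lengthWrt {G : Type*} [Group G] (S : Set G) (w : G) : ℕ :=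
  sInf {k | ∃ l : List G, (∀ s ∈ l, s ∈ S) ∧ l.prod = w ∧ l.length = k}

/-- A reduced word with letters in `S`. -/
def IsReducedWordWrt {G : Type*} [Group G] (S : Set G) (l : List G) : Prop :=
  (∀ s ∈ l, s ∈ S) ∧ lengthWrt S l.prod = l.length

/-- The Bruhat order with respect to `S`: `x ≤ y` iff some reduced word for `y` contains
a subword which is a reduced word for `x`. -/
def bruhatLEWrt {G : Type*} [Group G] (S : Set G) (x y : G) : Prop :=
  ∃ l : List G, IsReducedWordWrt S l ∧ l.prod = y ∧
    ∃ l' : List G, l'.Sublist l ∧ IsReducedWordWrt S l' ∧ l'.prod = x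

/-- `(W₂,S₂)` is a quasi subsystem of `(W₁,S₁)`: `W₂` is a subgroup of `W₁`, and for every
reduced expression `w = s₁ ⋯ s_k` in `(W₂,S₂)` one has `ℓ₁(w) = ℓ₁(s₁) + ⋯ + ℓ₁(s_k)`. -/
def IsQuasiSubsystemWrt {G : Type*} [Group G] (W₁ W₂ : Subgroup G) (S₁ S₂ : Set G) : Prop :=
  W₂ ≤ W₁ ∧ ∀ l : List G, (∀ s ∈ l, s ∈ S₂) → lengthWrt S₂ l.prod = l.length →
    lengthWrt S₁ l.prod = (l.map (lengthWrt S₁)).sum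


open Submodule (span)

theorem mem_baseOf_of_subset {E : Type*} [NormedAddCommGroup E] {P Q : Set E} {x : E}
    (hx : x ∈ baseOf P) (hQP : Q ⊆ P) (hxQ : x ∈ Q) : x ∈ baseOf Q :=
  ⟨hxQ, fun ⟨a, ha, b, hb, h⟩ => hx.2 ⟨a, hQP ha, b, hQP hb, h⟩⟩

section

variable {E : Type*} [NormedAddCommGroup E] [InnerProductSpace ℝ E]

section Reflections

theorem rootRefl_apply (α x : E) :
    rootRefl α x = x - (2 * ⟪α, x⟫ / ⟪α, α⟫) • α := by
  rw [rootRefl, LinearIsometryEquiv.coe_toLinearEquiv, Submodule.reflection_orthogonal_apply,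
    Submodule.reflection_singleton_apply, real_inner_self_eq_norm_sq]
  simp only [RCLike.ofReal_real_eq_id, id]
  module

theorem rootRefl_self (α : E) : rootRefl α α = -α :=
  Submodule.reflection_orthogonalComplement_singleton_eq_neg α

theorem rootRefl_rootRefl (α x : E) : rootRefl α (rootRefl α x) = x :=
  Submodule.reflection_reflection _ x

theorem inner_rootRefl_rootRefl (α x y : E) : ⟪rootRefl α x, rootRefl α y⟫ = ⟪x, y⟫ :=
  LinearIsometryEquiv.inner_map_map _ x y

theorem rootRefl_mul_self (α : E) : rootRefl α * rootRefl α = 1 :=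
  LinearEquiv.ext (rootRefl_rootRefl α)

theorem rootRefl_inv (α : E) : (rootRefl α)⁻¹ = rootRefl α :=
  inv_eq_of_mul_eq_one_right (rootRefl_mul_self α)

theorem rootRefl_neg (α : E) : rootRefl (-α) = rootRefl α := by
  ext x
  simp only [rootRefl_apply, inner_neg_left, inner_neg_right, neg_neg, smul_neg, mul_neg, neg_div,
    neg_smul]

theorem rootRefl_sub_self_mem_span (α x : E) : rootRefl α x - x ∈ span ℝ {α} := by
  rw [rootRefl_apply, sub_sub_cancel_left]
  exact Submodule.neg_mem _ (Submodule.smul_mem _ _ (Submodule.mem_span_singleton_self α))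

theorem rootRefl_mem {L : Submodule ℝ E} {α x : E} (hα : α ∈ L) (hx : x ∈ L) :
    rootRefl α x ∈ L := by
  rw [rootRefl_apply]
  exact L.sub_mem hx (L.smul_mem _ hα)

theorem conj_rootRefl {g : E ≃ₗ[ℝ] E} (hg : ∀ x y, ⟪g x, g y⟫ = ⟪x, y⟫) (α : E) :
    g * rootRefl α * g⁻¹ = rootRefl (g α) := by
  ext x
  obtain ⟨y, rfl⟩ := g.surjective x
  have hy : g⁻¹ (g y) = y := g.symm_apply_apply y
  simp only [LinearEquiv.mul_apply, hy, rootRefl_apply, map_sub, map_smul, hg]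

def reflGroup (T : Set E) : Subgroup (E ≃ₗ[ℝ] E) :=
  Subgroup.closure {g | ∃ α ∈ T, g = rootRefl α}

theorem rootRefl_mem_reflGroup {T : Set E} {α : E} (hα : α ∈ T) : rootRefl α ∈ reflGroup T :=
  Subgroup.subset_closure ⟨α, hα, rfl⟩

theorem reflGroup_mono {T T' : Set E} (h : T ⊆ T') : reflGroup T ≤ reflGroup T' :=
  Subgroup.closure_mono fun _ ⟨α, hα, hg⟩ => ⟨α, h hα, hg⟩

@[elab_as_elim]
theorem reflGroup_induction {T : Set E} {p : (E ≃ₗ[ℝ] E) → Prop}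
    (refl : ∀ α ∈ T, p (rootRefl α)) (one : p 1) (mul : ∀ g h, p g → p h → p (g * h))
    {g : E ≃ₗ[ℝ] E} (hg : g ∈ reflGroup T) : p g := by
  induction hg using Subgroup.closure_induction'' with
  | mem _ h => obtain ⟨α, hα, rfl⟩ := h; exact refl α hα
  | inv_mem _ h => obtain ⟨α, hα, rfl⟩ := h; rw [rootRefl_inv]; exact refl α hα
  | one => exact one
  | mul g h _ _ hg hh => exact mul g h hg hh

theorem exists_list_of_mem_reflGroup {T : Set E} {g : E ≃ₗ[ℝ] E} (hg : g ∈ reflGroup T) :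
    ∃ l : List E, (∀ α ∈ l, α ∈ T) ∧ (l.map rootRefl).prod = g :=
  reflGroup_induction (fun α hα => ⟨[α], by simpa using hα, by simp⟩) ⟨[], by simp, rfl⟩
    (fun _ _ ⟨l, hl, hg⟩ ⟨l', hl', hh⟩ =>
      ⟨l ++ l', fun α hα => (List.mem_append.mp hα).elim (hl α) (hl' α), by simp [hg, hh]⟩) hg

theorem list_prod_mem_reflGroup {T : Set E} {l : List E} (hl : ∀ α ∈ l, α ∈ T) :
    (l.map rootRefl).prod ∈ reflGroup T :=
  (reflGroup T).list_prod_mem fun _ hg => by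
    obtain ⟨α, hα, rfl⟩ := List.mem_map.mp hg
    exact rootRefl_mem_reflGroup (hl α hα)

theorem mapsTo_of_mem_reflGroup {T X : Set E} (hX : ∀ α ∈ T, Set.MapsTo (rootRefl α) X X)
    {g : E ≃ₗ[ℝ] E} (hg : g ∈ reflGroup T) : Set.MapsTo g X X :=
  reflGroup_induction hX (Set.mapsTo_id X) (fun _ _ hg hh => hg.comp hh) hg

theorem inner_map_map_of_mem_reflGroup {T : Set E} {g : E ≃ₗ[ℝ] E} (hg : g ∈ reflGroup T)
    (x y : E) : ⟪g x, g y⟫ = ⟪x, y⟫ := by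
  refine reflGroup_induction (fun α _ => inner_rootRefl_rootRefl α) (fun _ _ => rfl)
    (fun g h hg hh x y => ?_) hg x y
  exact (hg _ _).trans (hh x y)

theorem apply_sub_self_mem_span_of_mem_reflGroup {T : Set E} {g : E ≃ₗ[ℝ] E}
    (hg : g ∈ reflGroup T) (v : E) : g v - v ∈ span ℝ T := by
  refine reflGroup_induction (fun α hα v => ?_) (fun v => by simp) (fun g h hg hh v => ?_) hg v
  · exact Submodule.span_mono (Set.singleton_subset_iff.mpr hα) (rootRefl_sub_self_mem_span α v)
  · rw [LinearEquiv.mul_apply, ← sub_add_sub_cancel]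
    exact Submodule.add_mem _ (hg _) (hh v)

theorem apply_mem_iff_of_mem_reflGroup {T : Set E} {L : Submodule ℝ E} (hT : T ⊆ L)
    {g : E ≃ₗ[ℝ] E} (hg : g ∈ reflGroup T) {v : E} : g v ∈ L ↔ v ∈ L := by
  have h := Submodule.span_le.mpr hT (apply_sub_self_mem_span_of_mem_reflGroup hg v)
  exact ⟨fun hv => by simpa using L.sub_mem hv h, fun hv => by simpa using L.add_mem h hv⟩

end Reflections

theorem real_inner_mul_inner_self_lt_of_ne_smul {x y : E} (hy : y ≠ 0)
    (h : ∀ t : ℝ, x ≠ t • y) : ⟪x, y⟫ * ⟪x, y⟫ < ⟪x, x⟫ * ⟪y, y⟫ := by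
  have hyy : 0 < ⟪y, y⟫ := real_inner_self_pos.mpr hy
  set t := ⟪x, y⟫ / ⟪y, y⟫
  have hpos : 0 < ⟪x - t • y, x - t • y⟫ :=
    real_inner_self_pos.mpr (sub_ne_zero.mpr (h t))
  have hexp : ⟪x - t • y, x - t • y⟫ = ⟪x, x⟫ - ⟪x, y⟫ * ⟪x, y⟫ / ⟪y, y⟫ := by
    simp only [inner_sub_left, inner_sub_right, real_inner_smul_left, real_inner_smul_right,
      real_inner_comm x y, t]
    field_simp
    ring
  rw [hexp, sub_pos, div_lt_iff₀ hyy] at hpos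
  exact hpos

theorem exists_inner_pos_of_mem_closure {S : Set E} {β : E} (hβ : β ∈ AddSubmonoid.closure S)
    (hβ0 : β ≠ 0) : ∃ θ ∈ S, 0 < ⟪β, θ⟫ := by
  by_contra! h
  have hle : ∀ v ∈ AddSubmonoid.closure S, ⟪β, v⟫ ≤ 0 := fun v hv => by
    induction hv using AddSubmonoid.closure_induction with
    | mem x hx => exact h x hx
    | zero => simp
    | add x y _ _ hx hy => rw [inner_add_right]; linarith
  exact hβ0 (real_inner_self_nonpos.mp (hle β hβ))

theorem mem_span_iff_of_image_eq {g : E ≃ₗ[ℝ] E} {Θ : Set E} (h : ⇑g '' Θ = Θ) {v : E} :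
    g v ∈ span ℝ Θ ↔ v ∈ span ℝ Θ := by
  have hmap := Submodule.map_span (g : E →ₗ[ℝ] E) Θ
  rw [LinearEquiv.coe_coe, h] at hmap
  conv_lhs => rw [← hmap, Submodule.mem_map_equiv, LinearEquiv.symm_apply_apply]

theorem neg_apply_mem_baseOf_of_image_eq {w : E ≃ₗ[ℝ] E} {P : Set E}
    (h : ⇑w '' P = (fun x => -x) '' P) {γ : E} (hγ : γ ∈ baseOf P) : -w γ ∈ baseOf P := by
  have hpre : ∀ y ∈ P, ∃ x ∈ P, w x = -y := fun y hy => h.symm.subset ⟨y, hy, rfl⟩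
  obtain ⟨γ', hγ', hwγ⟩ := h.subset ⟨γ, hγ.1, rfl⟩
  refine ⟨by rwa [← hwγ, neg_neg], fun ⟨a, ha, b, hb, hab⟩ => hγ.2 ?_⟩
  obtain ⟨a', ha', hwa⟩ := hpre a ha
  obtain ⟨b', hb', hwb⟩ := hpre b hb
  exact ⟨a', ha', b', hb', w.injective (by rw [map_add, hwa, hwb, ← neg_add, ← hab, neg_neg])⟩

theorem longest_isLongest {H : Subgroup (E ≃ₗ[ℝ] E)} {P : Set E} (h : ∃ w, IsLongest H P w) :
    IsLongest H P (longest H P) := by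
  rw [longest, dif_pos h]
  exact h.choose_spec

theorem longest_mem (H : Subgroup (E ≃ₗ[ℝ] E)) (P : Set E) : longest H P ∈ H := by
  rw [longest]
  split_ifs with h
  exacts [h.choose_spec.1, one_mem H]

end

theorem sub_resTheta_mem_span (Θ : Set V) (v : V) : v - resTheta Θ v ∈ span ℝ Θ := by
  have h := (aTheta Θ).sub_starProjection_mem_orthogonal v
  rwa [aTheta, Submodule.orthogonal_orthogonal] at h

theorem resTheta_smul_add_of_mem_span (Θ : Set V) (a : ℝ) (α : V) {z : V} (hz : z ∈ span ℝ Θ) :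
    resTheta Θ (a • α + z) = a • resTheta Θ α := by
  have hz0 : (aTheta Θ).starProjection z = 0 :=
    (aTheta Θ).starProjection_apply_eq_zero_iff.mpr (Submodule.le_orthogonal_orthogonal _ hz)
  change (aTheta Θ).starProjection (a • α + z) = a • (aTheta Θ).starProjection α
  rw [map_add, map_smul, hz0, add_zero]

namespace RootData

section

variable {E : Type*} [NormedAddCommGroup E] [InnerProductSpace ℝ E] {R : RootData E}
  {L : Submodule ℝ E} {Θ : Set E}

section Basics

theorem IsRootSystem.ne_zero (hR : R.IsRootSystem) {β : E} (hβ : β ∈ R.roots) : β ≠ 0 :=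
  fun h => hR.zero_not_mem (h ▸ hβ)

theorem IsRootSystem.neg_mem (hR : R.IsRootSystem) {β : E} (hβ : β ∈ R.roots) :
    -β ∈ R.roots := by
  simpa only [rootRefl_self] using hR.reflect_mem β hβ β hβ

theorem IsRootSystem.neg_notMem_pos (hR : R.IsRootSystem) {β : E} (hβ : β ∈ R.pos) :
    -β ∉ R.pos :=
  (hR.pos_iff_neg_not_mem β (hR.pos_subset hβ)).mp hβ

theorem IsRootSystem.neg_mem_pos (hR : R.IsRootSystem) {β : E} (hβ : β ∈ R.roots)
    (hβn : β ∉ R.pos) : -β ∈ R.pos := by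
  by_contra h
  exact hβn ((hR.pos_iff_neg_not_mem β hβ).mpr h)

theorem IsRootSystem.base_subset_roots (hR : R.IsRootSystem) : R.base ⊆ R.roots :=
  hR.base_subset.trans hR.pos_subset

theorem IsRootSystem.exists_list_of_mem_pos (hR : R.IsRootSystem) {β : E} (hβ : β ∈ R.pos) :
    ∃ l : List E, (∀ x ∈ l, x ∈ R.base) ∧ l.sum = β ∧ l ≠ [] := by
  obtain ⟨l, hl, rfl⟩ := AddSubmonoid.exists_list_of_mem_closure (hR.pos_mem_closure β hβ)
  refine ⟨l, hl, rfl, ?_⟩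
  rintro rfl
  exact hR.ne_zero (hR.pos_subset hβ) rfl

theorem IsRootSystem.span_base (hR : R.IsRootSystem) : span ℝ R.base = ⊤ := by
  have hcl : AddSubmonoid.closure R.base ≤ (span ℝ R.base).toAddSubmonoid :=
    AddSubmonoid.closure_le.mpr Submodule.subset_span
  refine eq_top_iff.mpr (hR.span_eq_top ▸ Submodule.span_le.mpr fun β hβ => ?_)
  by_cases hp : β ∈ R.pos
  · exact hcl (hR.pos_mem_closure β hp)
  · simpa using (span ℝ R.base).neg_mem (hcl (hR.pos_mem_closure _ (hR.neg_mem_pos hβ hp)))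

def IsRootSystem.basis (hR : R.IsRootSystem) : Module.Basis R.base ℝ E :=
  .mk hR.base_indep (by rw [Subtype.range_coe, hR.span_base])

theorem IsRootSystem.basis_apply (hR : R.IsRootSystem) (θ : R.base) : hR.basis θ = θ :=
  Module.Basis.mk_apply _ _ θ

def IsRootSystem.coord (hR : R.IsRootSystem) (θ : R.base) : E →ₗ[ℝ] ℝ := hR.basis.coord θ

def IsRootSystem.height (hR : R.IsRootSystem) : E →ₗ[ℝ] ℝ := hR.basis.constr ℝ fun _ => 1

theorem IsRootSystem.height_base (hR : R.IsRootSystem) {θ : E} (hθ : θ ∈ R.base) :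
    hR.height θ = 1 := by
  have h := hR.basis.constr_basis ℝ (fun _ => (1 : ℝ)) ⟨θ, hθ⟩
  rw [hR.basis_apply] at h
  exact h

theorem IsRootSystem.one_le_height (hR : R.IsRootSystem) {β : E} (hβ : β ∈ R.pos) :
    1 ≤ hR.height β := by
  obtain ⟨l, hl, rfl, hne⟩ := hR.exists_list_of_mem_pos hβ
  rw [map_list_sum, List.map_congr_left fun x hx => hR.height_base (hl x hx), List.map_const',
    List.sum_replicate, nsmul_eq_mul, mul_one, Nat.one_le_cast]
  exact List.length_pos_iff.mpr hne

theorem IsRootSystem.mem_pos_of_height_nonneg (hR : R.IsRootSystem) {β : E} (hβ : β ∈ R.roots)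
    (h : 0 ≤ hR.height β) : β ∈ R.pos := by
  by_contra hp
  have := hR.one_le_height (hR.neg_mem_pos hβ hp)
  rw [map_neg] at this
  linarith

theorem IsRootSystem.apply_mem_pos_of_mem_closure (hR : R.IsRootSystem) {f : E →ₗ[ℝ] E} {S : Set E}
    (hS : ∀ x ∈ S, f x ∈ R.pos) {β : E} (hβ : β ∈ AddSubmonoid.closure S)
    (hfβ : f β ∈ R.roots) : f β ∈ R.pos := by
  have hcone : ∀ v ∈ AddSubmonoid.closure S, 0 ≤ hR.height (f v) := fun v hv => by
    induction hv using AddSubmonoid.closure_induction with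
    | mem x hx => exact zero_le_one.trans (hR.one_le_height (hS x hx))
    | zero => simp
    | add x y _ _ hx hy => rw [map_add, map_add]; exact add_nonneg hx hy
  exact hR.mem_pos_of_height_nonneg hfβ (hcone β hβ)

theorem IsRootSystem.coord_base (hR : R.IsRootSystem) (θ θ' : R.base) :
    hR.coord θ θ' = Finsupp.single θ' 1 θ := by
  rw [IsRootSystem.coord, ← hR.basis_apply θ', Module.Basis.coord_apply, Module.Basis.repr_self]

theorem IsRootSystem.coord_self (hR : R.IsRootSystem) (θ : R.base) : hR.coord θ θ = 1 := by
  rw [hR.coord_base, Finsupp.single_eq_same]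

theorem IsRootSystem.coord_nonneg (hR : R.IsRootSystem) {β : E} (hβ : β ∈ R.pos)
    (θ : R.base) : 0 ≤ hR.coord θ β := by
  have hcone : ∀ v ∈ AddSubmonoid.closure R.base, 0 ≤ hR.coord θ v := fun v hv => by
    induction hv using AddSubmonoid.closure_induction with
    | mem x hx =>
      classical
      rw [show x = ((⟨x, hx⟩ : R.base) : E) from rfl, hR.coord_base, Finsupp.single_apply]
      split_ifs <;> norm_num
    | zero => simp
    | add x y _ _ hx hy => rw [map_add]; exact add_nonneg hx hy
  exact hcone β (hR.pos_mem_closure β hβ)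

theorem IsRootSystem.mem_pos_of_coord_pos (hR : R.IsRootSystem) {β : E} (hβ : β ∈ R.roots)
    {θ : R.base} (h : 0 < hR.coord θ β) : β ∈ R.pos := by
  by_contra hp
  have := hR.coord_nonneg (hR.neg_mem_pos hβ hp) θ
  rw [map_neg] at this
  linarith

theorem IsRootSystem.mem_span_iff_coord_eq_zero (hR : R.IsRootSystem) {S : Set E}
    (hS : S ⊆ R.base) {v : E} :
    v ∈ span ℝ S ↔ ∀ θ : R.base, (θ : E) ∉ S → hR.coord θ v = 0 := by
  have himage : ⇑hR.basis '' {θ | (θ : E) ∈ S} = S := by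
    simp only [hR.basis_apply]
    ext x
    exact ⟨fun ⟨θ, hθ, hx⟩ => hx ▸ hθ, fun hx => ⟨⟨x, hS hx⟩, hx, rfl⟩⟩
  conv_lhs => rw [← himage, Module.Basis.mem_span_image]
  exact forall_congr' fun θ => by rw [Finset.mem_coe, Finsupp.mem_support_iff]; exact not_imp_comm

theorem IsRootSystem.exists_coord_pos_of_notMem_span (hR : R.IsRootSystem) {S : Set E}
    (hS : S ⊆ R.base) {β : E} (hβ : β ∈ R.pos) (hβS : β ∉ span ℝ S) :
    ∃ θ : R.base, (θ : E) ∉ S ∧ 0 < hR.coord θ β := by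
  by_contra! h
  exact hβS ((hR.mem_span_iff_coord_eq_zero hS).mpr fun θ hθ =>
    (h θ hθ).antisymm (hR.coord_nonneg hβ θ))

theorem IsRootSystem.mem_closure_of_mem_span (hR : R.IsRootSystem) {S : Set E}
    (hS : S ⊆ R.base) {β : E} (hβ : β ∈ R.pos) (hβS : β ∈ span ℝ S) :
    β ∈ AddSubmonoid.closure S := by
  obtain ⟨l, hl, rfl, -⟩ := hR.exists_list_of_mem_pos hβ
  refine (AddSubmonoid.closure S).list_sum_mem fun x hx => AddSubmonoid.subset_closure ?_
  by_contra hxS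
  have hx1 : hR.coord ⟨x, hl x hx⟩ x = 1 := hR.coord_self ⟨x, hl x hx⟩
  have hle : hR.coord ⟨x, hl x hx⟩ x ≤ hR.coord ⟨x, hl x hx⟩ l.sum := by
    rw [map_list_sum]
    exact List.single_le_sum (fun y hy => by
      obtain ⟨z, hz, rfl⟩ := List.mem_map.mp hy
      exact hR.coord_nonneg (hR.base_subset (hl z hz)) _) _ (List.mem_map_of_mem hx)
  rw [(hR.mem_span_iff_coord_eq_zero hS).mp hβS _ hxS, hx1] at hle
  linarith

end Basics

section Indecomposable

theorem IsRootSystem.exists_int_eq_pairing (hR : R.IsRootSystem) {α β : E} (hα : α ∈ R.roots)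
    (hβ : β ∈ R.roots) : ∃ z : ℤ, 2 * ⟪α, β⟫ / ⟪α, α⟫ = z := by
  obtain ⟨z, hz⟩ := hR.crystallographic α hα β hβ
  refine ⟨z, ?_⟩
  rw [hz, coroot, real_inner_smul_right, real_inner_comm]
  ring

theorem IsRootSystem.sub_mem_roots (hR : R.IsRootSystem) {β γ : E} (hβ : β ∈ R.roots)
    (hγ : γ ∈ R.roots) (hpos : 0 < ⟪β, γ⟫) (hne : β ≠ γ) : β - γ ∈ R.roots := by
  have hγγ : 0 < ⟪γ, γ⟫ := real_inner_self_pos.mpr (hR.ne_zero hγ)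
  have hββ : 0 < ⟪β, β⟫ := real_inner_self_pos.mpr (hR.ne_zero hβ)
  have hcs : ⟪β, γ⟫ * ⟪β, γ⟫ < ⟪β, β⟫ * ⟪γ, γ⟫ := by
    refine real_inner_mul_inner_self_lt_of_ne_smul (hR.ne_zero hγ) fun t ht => ?_
    rcases hR.reduced γ hγ t (ht ▸ hβ) with rfl | rfl
    · exact hne (by rwa [one_smul] at ht)
    · rw [ht, neg_one_smul, inner_neg_left] at hpos
      linarith
  obtain ⟨z, hz⟩ := hR.exists_int_eq_pairing hγ hβ
  obtain ⟨z', hz'⟩ := hR.exists_int_eq_pairing hβ hγ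
  rw [real_inner_comm β γ] at hz
  have hzpos : (0 : ℝ) < z := hz ▸ by positivity
  have hz'pos : (0 : ℝ) < z' := hz' ▸ by positivity
  -- `z * z' = 4 cos² ∠(β, γ) < 4`, so one of the two Cartan integers is `1`
  have hprod : (z : ℝ) * z' < 4 := by
    rw [← hz, ← hz', div_mul_div_comm, div_lt_iff₀ (by positivity)]
    linarith
  have hz1 : z = 1 ∨ z' = 1 := by
    have h0 : 0 < z := by exact_mod_cast hzpos
    have h0' : 0 < z' := by exact_mod_cast hz'pos
    have h4 : z * z' < 4 := by exact_mod_cast hprod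
    by_contra! h
    nlinarith [show 2 ≤ z by omega, show 2 ≤ z' by omega]
  rcases hz1 with rfl | rfl
  · have h := hR.reflect_mem γ hγ β hβ
    rwa [rootRefl_apply, real_inner_comm β γ, hz, Int.cast_one, one_smul] at h
  · have h := hR.neg_mem (hR.reflect_mem β hβ γ hγ)
    rwa [rootRefl_apply, hz', Int.cast_one, one_smul, neg_sub] at h

theorem IsRootSystem.mem_baseOf_of_mem_base (hR : R.IsRootSystem) {θ : E} (hθ : θ ∈ R.base)
    (hθL : θ ∈ L) : θ ∈ baseOf (R.pos ∩ L) := by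
  refine ⟨⟨hR.base_subset hθ, hθL⟩, fun ⟨a, ha, b, hb, h⟩ => ?_⟩
  have hht := congrArg hR.height h
  rw [map_add, hR.height_base hθ] at hht
  linarith [hR.one_le_height ha.1, hR.one_le_height hb.1]

theorem IsRootSystem.sub_mem_of_mem_baseOf (hR : R.IsRootSystem) {γ β : E}
    (hγ : γ ∈ baseOf (R.pos ∩ L)) (hβ : β ∈ R.pos ∩ L) (hne : β ≠ γ) (hpos : 0 < ⟪β, γ⟫) :
    β - γ ∈ R.pos ∩ L := by
  have hroot := hR.sub_mem_roots (hR.pos_subset hβ.1) (hR.pos_subset hγ.1.1) hpos hne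
  have hL : β - γ ∈ L := L.sub_mem hβ.2 hγ.1.2
  refine ⟨?_, hL⟩
  by_contra hp
  exact hγ.2 ⟨β, hβ, -(β - γ), ⟨hR.neg_mem_pos hroot hp, L.neg_mem hL⟩, by abel⟩

theorem IsRootSystem.inner_nonpos_of_mem_baseOf (hR : R.IsRootSystem) {γ δ : E}
    (hγ : γ ∈ baseOf (R.pos ∩ L)) (hδ : δ ∈ baseOf (R.pos ∩ L)) (hne : γ ≠ δ) :
    ⟪γ, δ⟫ ≤ 0 := by
  by_contra! hpos
  exact hγ.2 ⟨δ, hδ.1, γ - δ, hR.sub_mem_of_mem_baseOf hδ hγ.1 hne hpos, by abel⟩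

/-- A counterexample `β` to `rootRefl_mem_of_mem_baseOf` yields the counterexample `β - γ`. -/
theorem IsRootSystem.sub_mem_of_rootRefl_notMem_pos (hR : R.IsRootSystem) {γ β : E}
    (hγ : γ ∈ baseOf (R.pos ∩ L)) (hβ : β ∈ R.pos ∩ L) (hne : β ≠ γ)
    (hs : rootRefl γ β ∉ R.pos) :
    β - γ ∈ R.pos ∩ L ∧ β - γ ≠ γ ∧ rootRefl γ (β - γ) ∉ R.pos := by
  have hγr := hR.pos_subset hγ.1.1
  set δ := -rootRefl γ β with hδ
  have hδP : δ ∈ R.pos ∩ L :=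
    ⟨hR.neg_mem_pos (hR.reflect_mem γ hγr β (hR.pos_subset hβ.1)) hs,
      L.neg_mem (rootRefl_mem hγ.1.2 hβ.2)⟩
  -- `δ = c γ - β` with `c = 2⟪γ, β⟫/⟪γ, γ⟫`, and comparing heights gives `c > 0`
  have hpos : 0 < ⟪β, γ⟫ := by
    have hht := hR.one_le_height hδP.1
    rw [hδ, rootRefl_apply, map_neg, map_sub, map_smul, smul_eq_mul] at hht
    have hc : 0 < 2 * ⟪γ, β⟫ / ⟪γ, γ⟫ := by
      by_contra! hc
      nlinarith [hR.one_le_height hβ.1, hR.one_le_height hγ.1.1]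
    rw [real_inner_comm]
    linarith [(div_pos_iff_of_pos_right (real_inner_self_pos.mpr (hR.ne_zero hγr))).mp hc]
  have hδγ : δ ≠ γ := by
    intro h
    apply hne
    rw [← rootRefl_rootRefl γ β, ← neg_neg (rootRefl γ β), ← hδ, h, map_neg, rootRefl_self,
      neg_neg]
  have hδpos : 0 < ⟪δ, γ⟫ := by
    rwa [hδ, inner_neg_left, ← inner_neg_right, ← rootRefl_self, inner_rootRefl_rootRefl]
  refine ⟨hR.sub_mem_of_mem_baseOf hγ hβ hne hpos, fun h => ?_, ?_⟩
  · have h2 : β = (2 : ℝ) • γ := by rw [two_smul]; exact sub_eq_iff_eq_add.mp h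
    have := hR.reduced γ hγr 2 (h2 ▸ hR.pos_subset hβ.1)
    norm_num at this
  · have : rootRefl γ (β - γ) = -(δ - γ) := by
      rw [map_sub, rootRefl_self, hδ]
      abel
    rw [this]
    exact hR.neg_notMem_pos (hR.sub_mem_of_mem_baseOf hγ hδP hδγ hδpos).1

theorem IsRootSystem.rootRefl_mem_of_mem_baseOf (hR : R.IsRootSystem) {γ β : E}
    (hγ : γ ∈ baseOf (R.pos ∩ L)) (hβ : β ∈ R.pos ∩ L) (hne : β ≠ γ) :
    rootRefl γ β ∈ R.pos ∩ L := by
  refine ⟨?_, rootRefl_mem hγ.1.2 hβ.2⟩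
  by_contra hs
  -- otherwise `β, β - γ, β - 2γ, …` would all be in the finite set `Δ⁺ ∩ L`
  have hdesc : ∀ k : ℕ, β - (k : ℝ) • γ ∈ R.pos ∩ L ∧ β - (k : ℝ) • γ ≠ γ ∧
      rootRefl γ (β - (k : ℝ) • γ) ∉ R.pos := by
    intro k
    induction k with
    | zero => simpa using ⟨hβ, hne, hs⟩
    | succ k ih =>
      rw [Nat.cast_succ, add_smul, one_smul, ← sub_sub]
      exact hR.sub_mem_of_rootRefl_notMem_pos hγ ih.1 ih.2.1 ih.2.2
  have hinj : Function.Injective fun k : ℕ => β - (k : ℝ) • γ := fun k k' h =>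
    Nat.cast_injective (smul_left_injective ℝ (hR.ne_zero (hR.pos_subset hγ.1.1))
      (sub_right_injective h))
  exact Set.infinite_of_injective_forall_mem hinj (fun k => (hdesc k).1)
    (hR.finite.subset fun x hx => hR.pos_subset hx.1)

theorem IsRootSystem.image_rootRefl_of_mem_baseOf (hR : R.IsRootSystem) {γ : E}
    (hγ : γ ∈ baseOf (R.pos ∩ L)) :
    rootRefl γ '' (R.pos ∩ L) = insert (-γ) ((R.pos ∩ L) \ {γ}) := by
  ext x
  constructor
  · rintro ⟨y, hy, rfl⟩
    rcases eq_or_ne y γ with rfl | hne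
    · exact Or.inl (rootRefl_self y)
    · refine Or.inr ⟨hR.rootRefl_mem_of_mem_baseOf hγ hy hne, fun h => ?_⟩
      rw [← rootRefl_rootRefl γ y, h, rootRefl_self] at hy
      exact hR.neg_notMem_pos hγ.1.1 hy.1
  · rintro (rfl | ⟨hx, hxγ⟩)
    · exact ⟨γ, hγ.1, rootRefl_self γ⟩
    · exact ⟨rootRefl γ x, hR.rootRefl_mem_of_mem_baseOf hγ hx hxγ, rootRefl_rootRefl γ x⟩

theorem IsRootSystem.mem_closure_baseOf (hR : R.IsRootSystem) {β : E} (hβ : β ∈ R.pos ∩ L) :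
    β ∈ AddSubmonoid.closure (baseOf (R.pos ∩ L)) := by
  suffices h : ∀ n : ℕ, ∀ β ∈ R.pos ∩ L, hR.height β ≤ n →
      β ∈ AddSubmonoid.closure (baseOf (R.pos ∩ L)) from h _ β hβ (Nat.le_ceil _)
  intro n
  induction n with
  | zero => intro β hβ hn; push_cast at hn; linarith [hR.one_le_height hβ.1]
  | succ n ih =>
    intro β hβ hn
    by_cases hB : β ∈ baseOf (R.pos ∩ L)
    · exact AddSubmonoid.subset_closure hB
    obtain ⟨a, ha, b, hb, rfl⟩ := not_not.mp fun h => hB ⟨hβ, h⟩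
    rw [map_add, Nat.cast_succ] at hn
    exact add_mem (ih a ha (by linarith [hR.one_le_height hb.1]))
      (ih b hb (by linarith [hR.one_le_height ha.1]))

end Indecomposable

section Longest

theorem IsRootSystem.mapsTo_of_mem_reflGroup_baseOf (hR : R.IsRootSystem) {w : E ≃ₗ[ℝ] E}
    (hw : w ∈ reflGroup (baseOf (R.pos ∩ L))) : Set.MapsTo w (R.roots ∩ L) (R.roots ∩ L) :=
  mapsTo_of_mem_reflGroup (fun α hα x hx =>
    (⟨hR.reflect_mem α (hR.pos_subset hα.1.1) x hx.1, rootRefl_mem hα.1.2 hx.2⟩ :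
      rootRefl α x ∈ R.roots ∩ L)) hw

theorem IsRootSystem.image_mul_rootRefl_inter (hR : R.IsRootSystem) (w : E ≃ₗ[ℝ] E) {γ : E}
    (hγ : γ ∈ baseOf (R.pos ∩ L)) (hwγ : w γ ∈ R.pos) :
    ⇑(w * rootRefl γ) '' (R.pos ∩ L) ∩ (R.pos ∩ L) =
      (⇑w '' (R.pos ∩ L) ∩ (R.pos ∩ L)) \ {w γ} := by
  rw [show ⇑(w * rootRefl γ) = ⇑w ∘ ⇑(rootRefl γ) from rfl, Set.image_comp,
    hR.image_rootRefl_of_mem_baseOf hγ, Set.image_insert_eq,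
    Set.image_sdiff w.injective, Set.image_singleton, map_neg,
    Set.insert_inter_of_notMem fun h => hR.neg_notMem_pos hwγ h.1, Set.sdiff_inter_right_comm]

theorem IsRootSystem.exists_apply_mem_pos_of_mem_baseOf (hR : R.IsRootSystem) {w : E ≃ₗ[ℝ] E}
    (hw : w ∈ reflGroup (baseOf (R.pos ∩ L))) {β : E} (hβ : β ∈ R.pos ∩ L) (hwβ : w β ∈ R.pos) :
    ∃ γ ∈ baseOf (R.pos ∩ L), w γ ∈ R.pos := by
  by_contra! h
  have hroots := hR.mapsTo_of_mem_reflGroup_baseOf hw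
  have hneg := hR.apply_mem_pos_of_mem_closure (f := -(w : E →ₗ[ℝ] E))
    (fun γ hγ => hR.neg_mem_pos (hroots ⟨hR.pos_subset hγ.1.1, hγ.1.2⟩).1 (h γ hγ))
    (hR.mem_closure_baseOf hβ) (hR.neg_mem (hroots ⟨hR.pos_subset hβ.1, hβ.2⟩).1)
  exact hR.neg_notMem_pos hwβ hneg

theorem IsRootSystem.image_eq_neg_of_image_inter_eq_empty (hR : R.IsRootSystem)
    {w : E ≃ₗ[ℝ] E} (hw : w ∈ reflGroup (baseOf (R.pos ∩ L)))
    (h : ⇑w '' (R.pos ∩ L) ∩ (R.pos ∩ L) = ∅) :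
    ⇑w '' (R.pos ∩ L) = (fun x => -x) '' (R.pos ∩ L) := by
  have hfin : (R.pos ∩ L).Finite := hR.finite.subset fun x hx => hR.pos_subset hx.1
  refine Set.eq_of_subset_of_ncard_le ?_ ?_ (hfin.image _)
  · rintro _ ⟨β, hβ, rfl⟩
    obtain ⟨hroot, hL⟩ := hR.mapsTo_of_mem_reflGroup_baseOf hw ⟨hR.pos_subset hβ.1, hβ.2⟩
    have hpos : w β ∉ R.pos := fun hp => h.subset ⟨⟨β, hβ, rfl⟩, hp, hL⟩
    exact ⟨-w β, ⟨hR.neg_mem_pos hroot hpos, L.neg_mem hL⟩, neg_neg _⟩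
  · rw [Set.ncard_image_of_injective _ neg_injective,
      Set.ncard_image_of_injective _ w.injective]

theorem IsRootSystem.exists_isLongest (hR : R.IsRootSystem) {H : Subgroup (E ≃ₗ[ℝ] E)}
    (hH : reflGroup (baseOf (R.pos ∩ L)) ≤ H) : ∃ w, IsLongest H (R.pos ∩ L) w := by
  have hfin : (R.pos ∩ L).Finite := hR.finite.subset fun x hx => hR.pos_subset hx.1
  -- a `w` keeping the fewest elements of `Δ⁺ ∩ L` positive is longest
  obtain ⟨w, hw, hmin⟩ := exists_minimalFor_of_wellFoundedLT
    (· ∈ reflGroup (baseOf (R.pos ∩ L))) (fun w => (⇑w '' (R.pos ∩ L) ∩ (R.pos ∩ L)).ncard)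
    ⟨1, one_mem _⟩
  refine ⟨w, hH hw, hR.image_eq_neg_of_image_inter_eq_empty hw ?_⟩
  by_contra hne
  obtain ⟨_, ⟨β, hβ, rfl⟩, hwβ⟩ := Set.nonempty_iff_ne_empty.mpr hne
  obtain ⟨γ, hγ, hwγ⟩ := hR.exists_apply_mem_pos_of_mem_baseOf hw hβ hwβ.1
  have hlt := Set.ncard_sdiff_singleton_lt_of_mem (a := w γ)
    (s := ⇑w '' (R.pos ∩ L) ∩ (R.pos ∩ L)) ⟨⟨γ, hγ.1, rfl⟩, hwγ,
      (hR.mapsTo_of_mem_reflGroup_baseOf hw ⟨hR.pos_subset hγ.1.1, hγ.1.2⟩).2⟩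
    ((hfin.image _).inter_of_left _)
  rw [← hR.image_mul_rootRefl_inter w hγ hwγ] at hlt
  exact hlt.not_ge (hmin (mul_mem hw (rootRefl_mem_reflGroup hγ)) hlt.le)

end Longest

section Weyl

theorem IsRootSystem.rootRefl_mem_pos_of_mem_base (hR : R.IsRootSystem) {θ β : E}
    (hθ : θ ∈ R.base) (hβ : β ∈ R.pos) (hne : β ≠ θ) : rootRefl θ β ∈ R.pos :=
  (hR.rootRefl_mem_of_mem_baseOf (L := ⊤) (hR.mem_baseOf_of_mem_base hθ trivial)
    ⟨hβ, trivial⟩ hne).1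

theorem IsRootSystem.exists_mem_reflGroup_apply_mem_base (hR : R.IsRootSystem) {β : E}
    (hβ : β ∈ R.pos) : ∃ g ∈ reflGroup R.base, g β ∈ R.base := by
  suffices h : ∀ n : ℕ, ∀ β ∈ R.pos, hR.height β ≤ n → ∃ g ∈ reflGroup R.base, g β ∈ R.base
    from h _ β hβ (Nat.le_ceil _)
  intro n
  induction n with
  | zero => intro β hβ hn; push_cast at hn; linarith [hR.one_le_height hβ]
  | succ n ih =>
    intro β hβ hn
    by_cases hb : β ∈ R.base
    · exact ⟨1, one_mem _, hb⟩
    obtain ⟨θ, hθ, hpos⟩ :=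
      exists_inner_pos_of_mem_closure (hR.pos_mem_closure β hβ) (hR.ne_zero (hR.pos_subset hβ))
    obtain ⟨z, hz⟩ := hR.exists_int_eq_pairing (hR.base_subset_roots hθ) (hR.pos_subset hβ)
    have hz1 : (1 : ℝ) ≤ z := by
      have : (0 : ℝ) < z := hz ▸ div_pos (by rw [real_inner_comm]; linarith)
        (real_inner_self_pos.mpr (hR.ne_zero (hR.base_subset_roots hθ)))
      exact_mod_cast (show (0 : ℤ) < z by exact_mod_cast this)
    have hht : hR.height (rootRefl θ β) ≤ n := by
      rw [rootRefl_apply, hz, map_sub, map_smul, hR.height_base hθ, smul_eq_mul, mul_one]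
      push_cast at hn
      linarith
    obtain ⟨g, hg, hgβ⟩ :=
      ih _ (hR.rootRefl_mem_pos_of_mem_base hθ hβ fun h => hb (h ▸ hθ)) hht
    exact ⟨g * rootRefl θ, mul_mem hg (rootRefl_mem_reflGroup hθ), hgβ⟩

theorem IsRootSystem.weylGroup_le_reflGroup_base (hR : R.IsRootSystem) :
    R.weylGroup ≤ reflGroup R.base := by
  have hpos : ∀ β ∈ R.pos, rootRefl β ∈ reflGroup R.base := fun β hβ => by
    obtain ⟨g, hg, hgβ⟩ := hR.exists_mem_reflGroup_apply_mem_base hβ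
    have hconj := conj_rootRefl (inner_map_map_of_mem_reflGroup hg) β
    have : rootRefl β = g⁻¹ * rootRefl (g β) * g := by rw [← hconj]; group
    rw [this]
    exact mul_mem (mul_mem (inv_mem hg) (rootRefl_mem_reflGroup hgβ)) hg
  refine Subgroup.closure_le _ |>.mpr ?_
  rintro _ ⟨β, hβ, rfl⟩
  by_cases hp : β ∈ R.pos
  · exact hpos β hp
  · rw [← rootRefl_neg]
    exact hpos _ (hR.neg_mem_pos hβ hp)

/-- The exchange condition for words in the simple reflections. -/
theorem IsRootSystem.exists_prod_eq_mul_rootRefl (hR : R.IsRootSystem) {θ : E}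
    (hθ : θ ∈ R.base) {l : List E} (hl : ∀ x ∈ l, x ∈ R.base)
    (h : (l.map rootRefl).prod θ ∉ R.pos) :
    ∃ l' : List E, (∀ x ∈ l', x ∈ R.base) ∧ l'.length + 1 = l.length ∧
      (l.map rootRefl).prod = (l'.map rootRefl).prod * rootRefl θ := by
  induction l with
  | nil => exact absurd (hR.base_subset hθ) h
  | cons a t ih =>
    have ht : ∀ x ∈ t, x ∈ R.base := fun x hx => hl x (List.mem_cons_of_mem a hx)
    have ha : a ∈ R.base := hl a List.mem_cons_self
    rw [List.map_cons, List.prod_cons] at h ⊢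
    set u := (t.map rootRefl).prod
    by_cases hu : u θ ∈ R.pos
    · have huθ : u θ = a := by
        by_contra hne
        exact h (hR.rootRefl_mem_pos_of_mem_base ha hu hne)
      have hconj : u * rootRefl θ * u⁻¹ = rootRefl a := huθ ▸
        conj_rootRefl (inner_map_map_of_mem_reflGroup (list_prod_mem_reflGroup ht)) θ
      exact ⟨t, ht, rfl, by rw [← hconj, inv_mul_cancel_right]⟩
    · obtain ⟨t', ht', hlen, heq⟩ := ih ht hu
      refine ⟨a :: t', ?_, by simp [hlen], ?_⟩
      · exact fun x hx => (List.mem_cons.mp hx).elim (· ▸ ha) (ht' x)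
      · rw [heq, List.map_cons, List.prod_cons, mul_assoc]

theorem IsRootSystem.eq_one_of_mapsTo_pos (hR : R.IsRootSystem) {g : E ≃ₗ[ℝ] E}
    (hg : g ∈ R.weylGroup) (h : Set.MapsTo g R.pos R.pos) : g = 1 := by
  obtain ⟨l, hl, rfl⟩ := exists_list_of_mem_reflGroup (hR.weylGroup_le_reflGroup_base hg)
  clear hg
  induction hn : l.length using Nat.strong_induction_on generalizing l with
  | _ n ih =>
  rcases l.eq_nil_or_concat with rfl | ⟨l₀, θ, rfl⟩
  · rfl
  have hθ : θ ∈ R.base := hl θ (by simp)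
  rw [List.concat_eq_append, List.map_append, List.prod_append, List.map_singleton,
    List.prod_singleton] at h ⊢
  have hneg : (l₀.map rootRefl).prod θ ∉ R.pos := fun hp => by
    have := h (hR.base_subset hθ)
    rw [LinearEquiv.mul_apply, rootRefl_self, map_neg] at this
    exact hR.neg_notMem_pos hp this
  obtain ⟨l', hl', hlen, heq⟩ :=
    hR.exists_prod_eq_mul_rootRefl hθ (fun x hx => hl x (by simp [hx])) hneg
  rw [heq, mul_assoc, rootRefl_mul_self, mul_one] at h ⊢
  exact ih l'.length (by simp at hn; omega) l' hl' h rfl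

end Weyl

section Parabolic

theorem IsRootSystem.baseOf_pos_inter_span (hR : R.IsRootSystem) (hΘ : Θ ⊆ R.base) :
    baseOf (R.pos ∩ span ℝ Θ) = Θ := by
  have hsub : Θ ⊆ baseOf (R.pos ∩ span ℝ Θ) := fun θ hθ =>
    hR.mem_baseOf_of_mem_base (hΘ hθ) (Submodule.subset_span hθ)
  refine Set.Subset.antisymm (fun γ hγ => ?_) hsub
  obtain ⟨θ, hθ, hpos⟩ := exists_inner_pos_of_mem_closure
    (hR.mem_closure_of_mem_span hΘ hγ.1.1 hγ.1.2) (hR.ne_zero (hR.pos_subset hγ.1.1))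
  by_contra hγΘ
  exact hpos.not_ge (hR.inner_nonpos_of_mem_baseOf hγ (hsub hθ) fun h => hγΘ (h ▸ hθ))

theorem IsRootSystem.isLongest_wTheta (hR : R.IsRootSystem) (hΘ : Θ ⊆ R.base) :
    IsLongest (parabolicSub Θ) (R.pos ∩ span ℝ Θ) (R.wTheta Θ) :=
  longest_isLongest (hR.exists_isLongest (by rw [hR.baseOf_pos_inter_span hΘ]; exact le_rfl))

theorem IsRootSystem.neg_wTheta_mem (hR : R.IsRootSystem) (hΘ : Θ ⊆ R.base) {θ : E}
    (hθ : θ ∈ Θ) : -R.wTheta Θ θ ∈ Θ := by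
  have h := neg_apply_mem_baseOf_of_image_eq (hR.isLongest_wTheta hΘ).2
    ((hR.baseOf_pos_inter_span hΘ).symm ▸ hθ)
  rwa [hR.baseOf_pos_inter_span hΘ] at h

theorem IsRootSystem.mapsTo_pos_diff_span (hR : R.IsRootSystem) {S T : Set E}
    (hS : S ⊆ R.base) (hT : T ⊆ R.roots ∩ span ℝ S) {g : E ≃ₗ[ℝ] E} (hg : g ∈ reflGroup T) :
    Set.MapsTo g (R.pos \ span ℝ S) (R.pos \ span ℝ S) := by
  rintro β ⟨hβ, hβS⟩
  have hTS : T ⊆ span ℝ S := fun α hα => (hT hα).2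
  have hroot : g β ∈ R.roots := mapsTo_of_mem_reflGroup
    (fun α hα x hx => hR.reflect_mem α (hT hα).1 x hx) hg (hR.pos_subset hβ)
  have hdiff : g β - β ∈ span ℝ S :=
    Submodule.span_le.mpr hTS (apply_sub_self_mem_span_of_mem_reflGroup hg β)
  obtain ⟨θ, hθS, hθ⟩ := hR.exists_coord_pos_of_notMem_span hS hβ hβS
  have hcoord : hR.coord θ (g β) = hR.coord θ β := by
    rw [← sub_eq_zero, ← map_sub]
    exact (hR.mem_span_iff_coord_eq_zero hS).mp hdiff θ hθS
  exact ⟨hR.mem_pos_of_coord_pos hroot (hcoord ▸ hθ),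
    (apply_mem_iff_of_mem_reflGroup hTS hg).not.mpr hβS⟩

theorem IsRootSystem.mapsTo_wTheta (hR : R.IsRootSystem) (hΘ : Θ ⊆ R.base) :
    Set.MapsTo (R.wTheta Θ) (R.pos \ span ℝ Θ) (R.pos \ span ℝ Θ) :=
  hR.mapsTo_pos_diff_span hΘ (fun _ hθ => ⟨hR.base_subset_roots (hΘ hθ),
    Submodule.subset_span hθ⟩) (hR.isLongest_wTheta hΘ).1

end Parabolic

section Wset

theorem Wset_eq_inf_stabilizer :
    R.Wset Θ = ↑(R.weylGroup ⊓ MulAction.stabilizer (E ≃ₗ[ℝ] E) Θ) := by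
  ext g
  simp only [Wset, Set.mem_ofPred_eq, SetLike.mem_coe, Subgroup.mem_inf,
    MulAction.mem_stabilizer_iff, ← Set.image_smul, LinearEquiv.smul_def]

def inversionsOutside (R : RootData E) (Θ : Set E) (w : E ≃ₗ[ℝ] E) : Set E :=
  {β ∈ R.pos \ span ℝ Θ | w β ∉ R.pos}

theorem IsRootSystem.mapsTo_roots_of_mem_weylGroup (hR : R.IsRootSystem) {g : E ≃ₗ[ℝ] E}
    (hg : g ∈ R.weylGroup) : Set.MapsTo g R.roots R.roots :=
  mapsTo_of_mem_reflGroup (fun α hα _ hx => hR.reflect_mem α hα _ hx) hg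

theorem IsRootSystem.notMem_span_of_mem_base_diff (hR : R.IsRootSystem) (hΘ : Θ ⊆ R.base)
    {α : E} (hα : α ∈ R.base \ Θ) : α ∉ span ℝ Θ := fun h => by
  have := (hR.mem_span_iff_coord_eq_zero hΘ).mp h ⟨α, hα.1⟩ hα.2
  rw [hR.coord_self] at this
  exact one_ne_zero this

theorem IsRootSystem.mapsTo_pos_inter_span_of_mem_Wset (hR : R.IsRootSystem) (hΘ : Θ ⊆ R.base)
    {w : E ≃ₗ[ℝ] E} (hw : w ∈ R.Wset Θ) : Set.MapsTo w (R.pos ∩ span ℝ Θ) R.pos :=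
  fun _ hβ => hR.apply_mem_pos_of_mem_closure (f := w)
    (fun _ hθ => hR.base_subset (hΘ (hw.2 ▸ Set.mem_image_of_mem w hθ)))
    (hR.mem_closure_of_mem_span hΘ hβ.1 hβ.2)
    (hR.mapsTo_roots_of_mem_weylGroup hw.1 (hR.pos_subset hβ.1))

theorem IsRootSystem.eq_one_of_inversionsOutside_eq_empty (hR : R.IsRootSystem)
    (hΘ : Θ ⊆ R.base) {w : E ≃ₗ[ℝ] E} (hw : w ∈ R.Wset Θ) (h : R.inversionsOutside Θ w = ∅) :
    w = 1 := by
  refine hR.eq_one_of_mapsTo_pos hw.1 fun β hβ => ?_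
  by_cases hβΘ : β ∈ span ℝ Θ
  · exact hR.mapsTo_pos_inter_span_of_mem_Wset hΘ hw ⟨hβ, hβΘ⟩
  · by_contra hwβ
    exact h.subset ⟨⟨hβ, hβΘ⟩, hwβ⟩

theorem IsRootSystem.exists_base_apply_notMem_pos (hR : R.IsRootSystem) (hΘ : Θ ⊆ R.base)
    {w : E ≃ₗ[ℝ] E} (hw : w ∈ R.Wset Θ) (h : (R.inversionsOutside Θ w).Nonempty) :
    ∃ α ∈ R.base \ Θ, w α ∉ R.pos := by
  obtain ⟨β, ⟨hβ, -⟩, hwβ⟩ := h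
  by_contra! hbase
  refine hwβ (hR.apply_mem_pos_of_mem_closure (f := w) (fun α hα => ?_) (hR.pos_mem_closure β hβ)
    (hR.mapsTo_roots_of_mem_weylGroup hw.1 (hR.pos_subset hβ)))
  by_cases hαΘ : α ∈ Θ
  · exact hR.mapsTo_pos_inter_span_of_mem_Wset hΘ hw
      ⟨hR.base_subset hα, Submodule.subset_span hαΘ⟩
  · exact hbase α ⟨hα, hαΘ⟩

/-- Such a `β` is `c • α` plus an element of `span Θ`, with `c > 0`, and `w` preserves
`span Θ`. -/
theorem IsRootSystem.apply_notMem_pos_of_mem_span_insert (hR : R.IsRootSystem)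
    (hΘ : Θ ⊆ R.base) {w : E ≃ₗ[ℝ] E} (hw : w ∈ R.Wset Θ) {α : E} (hα : α ∈ R.base \ Θ)
    (hwα : w α ∉ R.pos) {β : E} (hβ : β ∈ R.pos ∩ span ℝ (insert α Θ)) (hβΘ : β ∉ span ℝ Θ) :
    w β ∉ R.pos := by
  obtain ⟨a, z, hz, hβz⟩ := Submodule.mem_span_insert.mp hβ.2
  have hza : hR.coord ⟨α, hα.1⟩ z = 0 := (hR.mem_span_iff_coord_eq_zero hΘ).mp hz _ hα.2
  have ha : 0 < a := by
    have h := hR.coord_nonneg hβ.1 ⟨α, hα.1⟩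
    rw [hβz, map_add, map_smul, hza, hR.coord_self, smul_eq_mul, mul_one, add_zero] at h
    refine h.lt_of_ne fun ha => hβΘ ?_
    rwa [hβz, ← ha, zero_smul, zero_add]
  have hnwα : -w α ∈ R.pos :=
    hR.neg_mem_pos (hR.mapsTo_roots_of_mem_weylGroup hw.1 (hR.base_subset_roots hα.1)) hwα
  obtain ⟨θ, hθΘ, hθ⟩ := hR.exists_coord_pos_of_notMem_span hΘ hnwα fun h =>
    hR.notMem_span_of_mem_base_diff hΘ hα
      ((mem_span_iff_of_image_eq hw.2).mp (by simpa using (span ℝ Θ).neg_mem h))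
  have hwz : hR.coord θ (w z) = 0 :=
    (hR.mem_span_iff_coord_eq_zero hΘ).mp ((mem_span_iff_of_image_eq hw.2).mpr hz) θ hθΘ
  intro hwβ
  have h := hR.coord_nonneg hwβ θ
  rw [hβz, map_add, map_smul, map_add, map_smul, hwz, add_zero, smul_eq_mul] at h
  rw [map_neg] at hθ
  nlinarith

end Wset

end

section

variable {R : RootData V} {Θ : Set V}

section Along

theorem mem_rootsAlong_iff {α β : V} :
    β ∈ R.rootsAlong Θ α ↔ β ∈ R.roots ∧ β ∈ span ℝ (insert α Θ) := by
  refine and_congr_right fun _ => ⟨fun ⟨c, hc⟩ => ?_, fun h => ?_⟩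
  · refine Submodule.mem_span_insert.mpr ⟨c, β - c • α, ?_, by abel⟩
    convert sub_mem (sub_resTheta_mem_span Θ β)
      (Submodule.smul_mem _ c (sub_resTheta_mem_span Θ α)) using 1
    rw [hc]
    module
  · obtain ⟨a, z, hz, rfl⟩ := Submodule.mem_span_insert.mp h
    exact ⟨a, resTheta_smul_add_of_mem_span Θ a α hz⟩

theorem IsRootSystem.posAlong_eq (hR : R.IsRootSystem) (α : V) :
    R.posAlong Θ α = R.pos ∩ span ℝ (insert α Θ) := by
  ext β
  simp only [posAlong, Set.mem_inter_iff, mem_rootsAlong_iff, SetLike.mem_coe]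
  exact ⟨fun ⟨⟨_, h⟩, hp⟩ => ⟨hp, h⟩, fun ⟨hp, h⟩ => ⟨⟨hR.pos_subset hp, h⟩, hp⟩⟩

theorem IsRootSystem.isLongest_longest_weylAlong (hR : R.IsRootSystem) (α : V) :
    IsLongest (R.weylAlong Θ α) (R.pos ∩ span ℝ (insert α Θ))
      (longest (R.weylAlong Θ α) (R.posAlong Θ α)) := by
  have hP := hR.posAlong_eq (Θ := Θ) α
  have h := longest_isLongest (H := R.weylAlong Θ α) (P := R.posAlong Θ α)
    (hP ▸ hR.exists_isLongest (reflGroup_mono fun γ hγ =>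
      mem_rootsAlong_iff.mpr ⟨hR.pos_subset hγ.1.1, hγ.1.2⟩))
  exact ⟨h.1, hP ▸ h.2⟩

theorem IsRootSystem.sigmaRefl_mem_weylGroup (hR : R.IsRootSystem) (hΘ : Θ ⊆ R.base) (α : V) :
    R.sigmaRefl Θ α ∈ R.weylGroup :=
  mul_mem (reflGroup_mono (fun _ h => h.1) (longest_mem _ _))
    (reflGroup_mono (hΘ.trans hR.base_subset_roots) (longest_mem _ _))

theorem IsUseful.sigmaRefl_mul_self {α : V} (h : R.IsUseful Θ α) :
    R.sigmaRefl Θ α * R.sigmaRefl Θ α = 1 := by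
  rw [← pow_two, ← h, pow_orderOf_eq_one]

theorem IsUseful.sigmaRefl_sigmaRefl {α : V} (h : R.IsUseful Θ α) (x : V) :
    R.sigmaRefl Θ α (R.sigmaRefl Θ α x) = x := by
  rw [← LinearEquiv.mul_apply, h.sigmaRefl_mul_self]
  rfl

theorem IsRootSystem.neg_sigmaRefl_mem (hR : R.IsRootSystem) (hΘ : Θ ⊆ R.base) {α β : V}
    (hβ : β ∈ R.pos ∩ span ℝ (insert α Θ)) (hβΘ : β ∉ span ℝ Θ) :
    -R.sigmaRefl Θ α β ∈ R.pos ∩ span ℝ (insert α Θ) := by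
  have hw := hR.mapsTo_wTheta hΘ ⟨hβ.1, hβΘ⟩
  have hwL : R.wTheta Θ β ∈ span ℝ (insert α Θ) :=
    (apply_mem_iff_of_mem_reflGroup (fun _ hθ => Submodule.subset_span (Set.mem_insert_of_mem α hθ))
      (longest_mem _ _)).mpr hβ.2
  obtain ⟨γ, hγ, hγeq⟩ := (hR.isLongest_longest_weylAlong α).2.subset ⟨_, ⟨hw.1, hwL⟩, rfl⟩
  show -longest _ _ (R.wTheta Θ β) ∈ _
  rwa [← hγeq, neg_neg]

theorem IsRootSystem.sigmaRefl_mem_of_mem (hR : R.IsRootSystem) (hΘ : Θ ⊆ R.base) {α : V}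
    (hα : R.IsUseful Θ α) {θ : V} (hθ : θ ∈ Θ) : R.sigmaRefl Θ α θ ∈ Θ := by
  have hwθ := hR.neg_wTheta_mem hΘ hθ
  have hσ : R.sigmaRefl Θ α θ ∈ baseOf (R.pos ∩ span ℝ (insert α Θ)) := by
    have h := neg_apply_mem_baseOf_of_image_eq (hR.isLongest_longest_weylAlong α).2
      (hR.mem_baseOf_of_mem_base (hΘ hwθ) (Submodule.subset_span (Set.mem_insert_of_mem α hwθ)))
    rwa [map_neg, neg_neg] at h
  by_cases hs : R.sigmaRefl Θ α θ ∈ span ℝ Θ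
  · have h := mem_baseOf_of_subset hσ
      (Set.inter_subset_inter_right _ (Submodule.span_mono (Set.subset_insert α Θ))) ⟨hσ.1.1, hs⟩
    rwa [hR.baseOf_pos_inter_span hΘ] at h
  · have h := hR.neg_sigmaRefl_mem hΘ hσ.1 hs
    rw [hα.sigmaRefl_sigmaRefl] at h
    exact absurd h.1 (hR.neg_notMem_pos (hR.base_subset (hΘ hθ)))

theorem IsRootSystem.image_sigmaRefl (hR : R.IsRootSystem) (hΘ : Θ ⊆ R.base) {α : V}
    (hα : R.IsUseful Θ α) : ⇑(R.sigmaRefl Θ α) '' Θ = Θ :=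
  (((hR.finite.subset (hΘ.trans hR.base_subset_roots)).injOn_iff_bijOn_of_mapsTo
    fun _ hθ => hR.sigmaRefl_mem_of_mem hΘ hα hθ).mp (R.sigmaRefl Θ α).injective.injOn).image_eq

theorem IsRootSystem.mapsTo_sigmaRefl (hR : R.IsRootSystem) (hΘ : Θ ⊆ R.base) {α : V}
    (hα : α ∈ R.base) :
    Set.MapsTo (R.sigmaRefl Θ α) (R.pos \ span ℝ (insert α Θ)) (R.pos \ span ℝ (insert α Θ)) :=
  have hS : insert α Θ ⊆ R.base := Set.insert_subset hα hΘ
  (hR.mapsTo_pos_diff_span hS (fun _ hβ => mem_rootsAlong_iff.mp hβ) (longest_mem _ _)).comp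
    (hR.mapsTo_pos_diff_span hS (fun _ hθ => ⟨hR.base_subset_roots (hΘ hθ),
      Submodule.subset_span (Set.mem_insert_of_mem α hθ)⟩) (longest_mem _ _))

end Along

section Normal

theorem IsRootSystem.mem_ruPos_of_mem_base_diff (hR : R.IsRootSystem) (hΘ : Θ ⊆ R.base) {α : V}
    (hα : α ∈ R.base \ Θ) (huse : R.IsUseful Θ α) : α ∈ R.ruPos Θ := by
  refine ⟨hR.base_subset hα.1, ⟨fun h => ?_, ?_⟩, huse⟩
  · exact hR.notMem_span_of_mem_base_diff hΘ hα (by simpa [h] using sub_resTheta_mem_span Θ α)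
  · rw [hR.posAlong_eq]
    exact hR.mem_baseOf_of_mem_base hα.1 (Submodule.subset_span (Set.mem_insert α Θ))

theorem IsRootSystem.inversionsOutside_mul_sigmaRefl (hR : R.IsRootSystem) (hΘ : Θ ⊆ R.base)
    {w : V ≃ₗ[ℝ] V} (hw : w ∈ R.Wset Θ) {α : V} (hα : α ∈ R.base \ Θ) (huse : R.IsUseful Θ α)
    (hwα : w α ∉ R.pos) :
    R.inversionsOutside Θ (w * R.sigmaRefl Θ α) =
      R.sigmaRefl Θ α '' (R.inversionsOutside Θ w \ span ℝ (insert α Θ)) := by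
  set σ := R.sigmaRefl Θ α
  have hσΘ {v : V} : σ v ∈ span ℝ Θ ↔ v ∈ span ℝ Θ :=
    mem_span_iff_of_image_eq (hR.image_sigmaRefl hΘ huse)
  have hspan : span ℝ Θ ≤ span ℝ (insert α Θ) := Submodule.span_mono (Set.subset_insert α Θ)
  ext β
  constructor
  · rintro ⟨⟨hβ, hβΘ⟩, hwσβ⟩
    by_cases hβα : β ∈ span ℝ (insert α Θ)
    · -- then `-σ β ∈ Δ⁺(α) \ span Θ`, so the root `w (σ β)` is neither positive nor negative
      have hneg := hR.neg_sigmaRefl_mem hΘ ⟨hβ, hβα⟩ hβΘ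
      have h := hR.apply_notMem_pos_of_mem_span_insert hΘ hw hα hwα hneg
        fun h => hβΘ (hσΘ.mp (by simpa using (span ℝ Θ).neg_mem h))
      rw [map_neg] at h
      exact absurd (hR.neg_mem_pos (hR.mapsTo_roots_of_mem_weylGroup
        (mul_mem hw.1 (hR.sigmaRefl_mem_weylGroup hΘ α)) (hR.pos_subset hβ)) hwσβ) h
    · obtain ⟨hσβ, hσβα⟩ := hR.mapsTo_sigmaRefl hΘ hα.1 ⟨hβ, hβα⟩
      exact ⟨σ β, ⟨⟨⟨hσβ, fun h => hσβα (hspan h)⟩, hwσβ⟩, hσβα⟩, huse.sigmaRefl_sigmaRefl β⟩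
  · rintro ⟨γ, ⟨⟨⟨hγ, -⟩, hwγ⟩, hγα⟩, rfl⟩
    obtain ⟨hσγ, hσγα⟩ := hR.mapsTo_sigmaRefl hΘ hα.1 ⟨hγ, hγα⟩
    refine ⟨⟨hσγ, fun h => hσγα (hspan h)⟩, ?_⟩
    rwa [LinearEquiv.mul_apply, huse.sigmaRefl_sigmaRefl]

theorem IsRootSystem.ncard_inversionsOutside_mul_sigmaRefl_lt (hR : R.IsRootSystem)
    (hΘ : Θ ⊆ R.base) {w : V ≃ₗ[ℝ] V} (hw : w ∈ R.Wset Θ) {α : V} (hα : α ∈ R.base \ Θ)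
    (huse : R.IsUseful Θ α) (hwα : w α ∉ R.pos) :
    (R.inversionsOutside Θ (w * R.sigmaRefl Θ α)).ncard < (R.inversionsOutside Θ w).ncard := by
  rw [hR.inversionsOutside_mul_sigmaRefl hΘ hw hα huse hwα,
    Set.ncard_image_of_injective _ (R.sigmaRefl Θ α).injective]
  refine Set.ncard_lt_ncard ⟨Set.sdiff_subset, fun h => ?_⟩
    (hR.finite.subset fun β hβ => hR.pos_subset hβ.1.1)
  have hαN : α ∈ R.inversionsOutside Θ w :=
    ⟨⟨hR.base_subset hα.1, hR.notMem_span_of_mem_base_diff hΘ hα⟩, hwα⟩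
  exact (h hαN).2 (Submodule.subset_span (Set.mem_insert α Θ))

theorem IsRootSystem.WThetaPrime_le_inf_stabilizer (hR : R.IsRootSystem) (hΘ : Θ ⊆ R.base) :
    R.WThetaPrime Θ ≤ R.weylGroup ⊓ MulAction.stabilizer (V ≃ₗ[ℝ] V) Θ := by
  refine (Subgroup.closure_le _).mpr ?_
  rintro _ ⟨α, hα, rfl⟩
  rw [← Wset_eq_inf_stabilizer]
  exact ⟨hR.sigmaRefl_mem_weylGroup hΘ α, hR.image_sigmaRefl hΘ hα.2.2⟩

theorem IsRootSystem.mem_WThetaPrime_of_mem_Wset (hR : R.IsRootSystem) (hΘ : Θ ⊆ R.base)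
    (hnorm : R.IsNormal Θ) {w : V ≃ₗ[ℝ] V} (hw : w ∈ R.Wset Θ) : w ∈ R.WThetaPrime Θ := by
  induction hn : (R.inversionsOutside Θ w).ncard using Nat.strong_induction_on generalizing w
    with | _ n ih =>
  rcases (R.inversionsOutside Θ w).eq_empty_or_nonempty with h | h
  · rw [hR.eq_one_of_inversionsOutside_eq_empty hΘ hw h]
    exact one_mem _
  obtain ⟨α, hα, hwα⟩ := hR.exists_base_apply_notMem_pos hΘ hw h
  have huse := hnorm α hα
  have hσ : R.sigmaRefl Θ α ∈ R.WThetaPrime Θ :=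
    Subgroup.subset_closure ⟨α, hR.mem_ruPos_of_mem_base_diff hΘ hα huse, rfl⟩
  have hwσ : w * R.sigmaRefl Θ α ∈ R.Wset Θ := by
    rw [Wset_eq_inf_stabilizer] at hw ⊢
    exact mul_mem hw (hR.WThetaPrime_le_inf_stabilizer hΘ hσ)
  have h := mul_mem (ih _ (hn ▸ hR.ncard_inversionsOutside_mul_sigmaRefl_lt hΘ hw hα huse hwα)
    hwσ rfl) hσ
  rwa [mul_assoc, huse.sigmaRefl_mul_self, mul_one] at h

end Normal

end

end RootData

theorem WThetaPrime_eq_Wset_of_isNormal_general (R : RootData V) (hR : R.IsRootSystem)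
    (Θ : Set V) (hΘ : Θ ⊆ R.base) (hnorm : R.IsNormal Θ) :
    (R.WThetaPrime Θ : Set (V ≃ₗ[ℝ] V)) = R.Wset Θ := by
  refine Set.Subset.antisymm ?_ fun w hw => hR.mem_WThetaPrime_of_mem_Wset hΘ hnorm hw
  rw [RootData.Wset_eq_inf_stabilizer]
  exact hR.WThetaPrime_le_inf_stabilizer hΘ

/-- Corollary 3.3.5: if `Θ` is normal then `W(Θ)′ = W(Θ)`. -/
theorem WThetaPrime_eq_Wset_of_isNormal (R : RootData V) (hR : R.IsRootSystem)
    (Θ : Set V) (hΘ : Θ ⊆ R.base) (hne : Θ ≠ R.base) (hnorm : R.IsNormal Θ) :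
    (R.WThetaPrime Θ : Set (V ≃ₗ[ℝ] V)) = R.Wset Θ :=
  WThetaPrime_eq_Wset_of_isNormal_general R hR Θ hΘ hnorm

end
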